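/- Every empty 6-circuit whose spanning 6-face f_e neighbours 6 pairwise different faces has exactly 6 vertices and at least 13 edges. -/

import Mathlib

/-- A combinatorial map (connected graph cellularly embedded in an orientable surface),
given by a set of darts `D`, the edge involution `σ` and the rotation `ρ`. -/
structure CombMap where
  D : Type
  fin : Finite D
  σ : Equiv.Perm D
  ρ : Equiv.Perm D
  σ_invol : ∀ d, σ (σ d) = d
  σ_fixfree : ∀ d, σ d ≠ d
  conn : ∀ d d' : D, ∃ g ∈ Subgroup.closure ({σ, ρ} : Set (Equiv.Perm D)), g d = d'

attribute [instance] CombMap.fin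

namespace CombMap

variable (M : CombMap)

/-- The face permutation. -/
def φ : Equiv.Perm M.D := M.ρ * M.σ

def vSetoid : Setoid M.D :=
  ⟨M.ρ.SameCycle, ⟨fun _ => Equiv.Perm.SameCycle.refl _ _,
    Equiv.Perm.SameCycle.symm, Equiv.Perm.SameCycle.trans⟩⟩

def eSetoid : Setoid M.D :=
  ⟨M.σ.SameCycle, ⟨fun _ => Equiv.Perm.SameCycle.refl _ _,
    Equiv.Perm.SameCycle.symm, Equiv.Perm.SameCycle.trans⟩⟩

def fSetoid : Setoid M.D :=
  ⟨M.φ.SameCycle, ⟨fun _ => Equiv.Perm.SameCycle.refl _ _,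
    Equiv.Perm.SameCycle.symm, Equiv.Perm.SameCycle.trans⟩⟩

/-- Vertices are orbits of `ρ`. -/
def Vertex := Quotient M.vSetoid
/-- Edges are orbits of `σ`. -/
def Edge := Quotient M.eSetoid
/-- Faces are orbits of `φ`. -/
def Face := Quotient M.fSetoid

instance : Finite M.Vertex := Quotient.finite _
instance : Finite M.Edge := Quotient.finite _
instance : Finite M.Face := Quotient.finite _

def vtx (d : M.D) : M.Vertex := Quotient.mk M.vSetoid d
def edg (d : M.D) : M.Edge := Quotient.mk M.eSetoid d
def fce (d : M.D) : M.Face := Quotient.mk M.fSetoid d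

noncomputable def nV : ℕ := Nat.card M.Vertex
noncomputable def nE : ℕ := Nat.card M.Edge
noncomputable def nF : ℕ := Nat.card M.Face

/-- The size of a face: the length of its facial walk, i.e. the number of darts in it. -/
noncomputable def faceSize (f : M.Face) : ℕ := Nat.card {d : M.D // M.fce d = f}

/-- The degree of a vertex: the number of darts emanating from it. -/
noncomputable def degree (v : M.Vertex) : ℕ := Nat.card {d : M.D // M.vtx d = v}

/-- The face excess `Σ_f (d(f) - 3)`. -/
noncomputable def faceExcess : ℤ := ∑ᶠ f : M.Face, ((M.faceSize f : ℤ) - 3)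

/-- The underlying graph of the map is simple: no loops, no multiple edges. -/
def Simple : Prop :=
  (∀ d, M.vtx d ≠ M.vtx (M.σ d)) ∧
  ∀ d d', M.vtx d = M.vtx d' → M.vtx (M.σ d) = M.vtx (M.σ d') → M.edg d = M.edg d'

/-- The dual has no loops. -/
def DualLoopFree : Prop := ∀ d, M.fce d ≠ M.fce (M.σ d)

/-- The dual is simple: no loops and no multiple edges. -/
def DualSimple : Prop :=
  M.DualLoopFree ∧
  ∀ d d', M.fce d = M.fce d' → M.fce (M.σ d) = M.fce (M.σ d') → M.edg d = M.edg d'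

/-- The underlying simple graph on the vertices of the map. -/
def graph : SimpleGraph M.Vertex :=
  SimpleGraph.fromRel (fun a b => ∃ d, M.vtx d = a ∧ M.vtx (M.σ d) = b)

/-- The underlying simple graph of the dual map, on the faces of the map. -/
def dualGraph : SimpleGraph M.Face :=
  SimpleGraph.fromRel (fun a b => ∃ d, M.fce d = a ∧ M.fce (M.σ d) = b)

/-- Vertex `v` lies on the face `f`. -/
def VertexOnFace (v : M.Vertex) (f : M.Face) : Prop := ∃ d, M.fce d = f ∧ M.vtx d = v

/-- Faces `f` and `f'` share an edge. -/
def FaceAdj (f f' : M.Face) : Prop := ∃ d, M.fce d = f ∧ M.fce (M.σ d) = f'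

end CombMap

/-- `k`-connectivity of a graph: more than `k` vertices, and removing fewer than `k`
vertices never disconnects it. -/
def KConn {α : Type} (H : SimpleGraph α) (k : ℕ) : Prop :=
  k < Nat.card α ∧ ∀ S : Set α, S.ncard < k → (H.induce Sᶜ).Connected

namespace CombMap

variable (M : CombMap)

/-- An empty `k`-circuit: a map on at most `k` vertices with a spanning face `f_e` of
size `k`, whose underlying graph is simple, whose dual has no loops, and all of whose
dual multi-edges are incident with `f_e`. -/
def IsEmptyCircuit (k : ℕ) (fe : M.Face) : Prop :=
  M.nV ≤ k ∧ M.faceSize fe = k ∧ (∀ v : M.Vertex, M.VertexOnFace v fe) ∧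
  M.Simple ∧ M.DualLoopFree ∧
  ∀ d d', M.fce d = M.fce d' → M.fce (M.σ d) = M.fce (M.σ d') → M.edg d ≠ M.edg d' →
    (M.fce d = fe ∨ M.fce (M.σ d) = fe)

/-- An empty `k`-pair: a map on at most `k` vertices with two spanning faces
`f_e, f_e'` with `d(f_e)+d(f_e') = k` not sharing an edge, whose underlying graph is
simple, whose dual has no loops, and all of whose dual multi-edges are incident with
`f_e` or `f_e'`. -/
def IsEmptyPair (k : ℕ) (fe fe' : M.Face) : Prop :=
  M.nV ≤ k ∧ fe ≠ fe' ∧ M.faceSize fe + M.faceSize fe' = k ∧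
  (∀ v : M.Vertex, M.VertexOnFace v fe ∨ M.VertexOnFace v fe') ∧
  ¬ M.FaceAdj fe fe' ∧
  M.Simple ∧ M.DualLoopFree ∧
  ∀ d d', M.fce d = M.fce d' → M.fce (M.σ d) = M.fce (M.σ d') → M.edg d ≠ M.edg d' →
    (M.fce d = fe ∨ M.fce d = fe' ∨ M.fce (M.σ d) = fe ∨ M.fce (M.σ d) = fe')

end CombMap

/-!
Euler's formula for the orientable surface carrying the map makes `V - E + F` even and at
most `2`. Simplicity of the graph and loop-freeness of the dual make every face a `≥ 3`-gon,
and `f_e` is a hexagon, so `2E ≥ 3F + 3`; since `f_e` has six neighbours other than itself,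
`F ≥ 7`, hence `E ≥ 12`. Simplicity also gives `E ≤ C(V, 2)`, so `V ≤ 5` is impossible and
`V = 6`; finally `E = 12` would force `F = 7` and `V - E + F = 1`, which is odd.
-/

namespace Setoid

variable {α : Type*}

def merge (s : Setoid α) (a b : α) : Setoid α where
  r x y := s x y ∨ (s x a ∧ s y b) ∨ (s x b ∧ s y a)
  iseqv := by
    refine ⟨fun x => Or.inl (s.refl x), ?_, ?_⟩
    · rintro x y (h | ⟨h₁, h₂⟩ | ⟨h₁, h₂⟩)
      exacts [Or.inl (s.symm h), Or.inr (Or.inr ⟨h₂, h₁⟩), Or.inr (Or.inl ⟨h₂, h₁⟩)]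
    · intro x y z
      simp only [← Quotient.eq_iff_equiv]
      grind

theorem card_quotient_merge_add_one [Finite α] {s : Setoid α} {a b : α} (hab : ¬ s a b) :
    Nat.card (Quotient (s.merge a b)) + 1 = Nat.card (Quotient s) := by
  classical
  let π : Quotient s → Quotient (s.merge a b) := Quotient.map' id fun _ _ => Or.inl
  have hπ : Function.Bijective fun c : {c // c ≠ ⟦b⟧} => π c.1 := by
    refine ⟨fun ⟨c, hc⟩ ⟨c', hc'⟩ h => ?_, fun c => ?_⟩
    · induction c using Quotient.ind
      induction c' using Quotient.ind
      rcases Quotient.exact h with h | ⟨-, h⟩ | ⟨h, -⟩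
      · exact Subtype.ext (Quotient.sound h)
      · exact absurd (Quotient.sound h) hc'
      · exact absurd (Quotient.sound h) hc
    · induction c using Quotient.ind with | _ x => ?_
      by_cases hx : s x b
      · exact ⟨⟨⟦a⟧, fun h => hab (Quotient.exact h)⟩,
          Quotient.sound (Or.inr (Or.inl ⟨s.refl a, hx⟩))⟩
      · exact ⟨⟨⟦x⟧, fun h => hx (Quotient.exact h)⟩, rfl⟩
  rw [← Nat.card_eq_of_bijective _ hπ, ← Finite.card_option,
    Nat.card_congr (Equiv.optionSubtypeNe _)]

theorem merge_eq_self {s : Setoid α} {a b : α} (hab : s a b) : s.merge a b = s := by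
  refine le_antisymm (fun x y h => ?_) fun _ _ => Or.inl
  rcases h with h | ⟨hx, hy⟩ | ⟨hx, hy⟩
  · exact h
  · exact s.trans (s.trans hx hab) (s.symm hy)
  · exact s.trans (s.trans hx (s.symm hab)) (s.symm hy)

end Setoid

namespace Equiv.Perm

variable {α : Type*}

/-- Unlike `cycleType`, this counts the fixed points as cycles. -/
noncomputable def cycleCount (g : Perm α) : ℕ := Nat.card (Quotient (SameCycle.setoid g))

theorem cycleCount_one : cycleCount (1 : Perm α) = Nat.card α :=
  (Nat.card_eq_of_bijective _ ⟨fun _ _ h => sameCycle_one.mp (Quotient.exact h),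
    Quotient.mk_surjective⟩).symm

theorem cycleCount_le_card [Finite α] (g : Perm α) : cycleCount g ≤ Nat.card α :=
  Nat.card_le_card_of_surjective _ Quotient.mk_surjective

theorem sameCycle_apply_self (g : Perm α) (x : α) : g.SameCycle x (g x) :=
  sameCycle_apply_right.mpr .rfl

theorem SameCycle.mem_of_mapsTo [Finite α] {g : Perm α} {S : Set α} (hS : Set.MapsTo g S S)
    {x y : α} (hx : x ∈ S) (hxy : g.SameCycle x y) : y ∈ S := by
  obtain ⟨i, rfl⟩ := hxy.exists_nat_pow_eq
  exact (hS.iterate i) (by simpa only [coe_pow] using hx)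

theorem rel_apply_of_mem_closure {s : Setoid α} {S : Set (Perm α)}
    (hS : ∀ g ∈ S, ∀ x, s x (g x)) {g : Perm α} (hg : g ∈ Subgroup.closure S) (x : α) :
    s x (g x) := by
  induction hg using Subgroup.closure_induction generalizing x with
  | mem g hg => exact hS g hg x
  | one => exact s.refl x
  | mul g h _ _ ihg ihh => exact s.trans (ihh x) (ihg (h x))
  | inv g _ ih => simpa using s.symm (ih (g⁻¹ x))

section Swap

variable [DecidableEq α] {g : Perm α} {a b x y : α}

theorem swap_mul_apply_of_ne (ha : g x ≠ a) (hb : g x ≠ b) : (swap a b * g) x = g x :=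
  swap_apply_of_ne_of_ne ha hb

variable [Finite α]

theorem SameCycle.of_swap_mul (h : (swap a b * g).SameCycle x y) (hab : g.SameCycle a b) :
    g.SameCycle x y := by
  refine h.mem_of_mapsTo (S := {z | g.SameCycle x z}) (fun z (hz : g.SameCycle x z) => ?_) .rfl
  have hgz := hz.trans (sameCycle_apply_self g z)
  show g.SameCycle x ((swap a b * g) z)
  by_cases ha : g z = a
  · simpa [mul_apply, ha] using (ha ▸ hgz).trans hab
  by_cases hb : g z = b
  · simpa [mul_apply, hb] using (hb ▸ hgz).trans hab.symm
  rwa [swap_mul_apply_of_ne ha hb]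

theorem SameCycle.swap_mul_or (hax : g.SameCycle a x) :
    (swap a b * g).SameCycle a x ∨ (swap a b * g).SameCycle b x := by
  refine hax.mem_of_mapsTo
    (S := {z | (swap a b * g).SameCycle a z ∨ (swap a b * g).SameCycle b z})
    (fun z hz => ?_) (Or.inl .rfl)
  by_cases ha : g z = a
  · rw [Set.mem_ofPred_eq, ha]; exact Or.inl .rfl
  by_cases hb : g z = b
  · rw [Set.mem_ofPred_eq, hb]; exact Or.inr .rfl
  have hstep := sameCycle_apply_self (swap a b * g) z
  rw [swap_mul_apply_of_ne ha hb] at hstep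
  exact hz.imp (·.trans hstep) (·.trans hstep)

theorem SameCycle.swap_mul_of_not (hax : ¬ g.SameCycle a x) (hbx : ¬ g.SameCycle b x)
    (hxy : g.SameCycle x y) : (swap a b * g).SameCycle x y := by
  refine (hxy.mem_of_mapsTo (S := {z | g.SameCycle x z ∧ (swap a b * g).SameCycle x z})
    (fun z ⟨hz, hz'⟩ => ?_) ⟨.rfl, .rfl⟩).2
  have hgz := hz.trans (sameCycle_apply_self g z)
  have ha : g z ≠ a := fun h => hax (h ▸ hgz).symm
  have hb : g z ≠ b := fun h => hbx (h ▸ hgz).symm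
  have hstep := sameCycle_apply_self (swap a b * g) z
  rw [swap_mul_apply_of_ne ha hb] at hstep
  exact ⟨hgz, hz'.trans hstep⟩

/-- If `b = g^m a` with `m > 0` minimal, the `swap a b * g`-cycle of `a` is
`{a, g a, …, g^(m-1) a}`, which misses `b`. -/
theorem SameCycle.not_sameCycle_swap_mul (hab : g.SameCycle a b) (hne : a ≠ b) :
    ¬ (swap a b * g).SameCycle a b := by
  classical
  have hex : ∃ m, 0 < m ∧ (g ^ m) a = b := by
    obtain ⟨m, hm, -, h⟩ := hab.exists_pow_eq''
    exact ⟨m, hm, h⟩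
  obtain ⟨hm, hgm⟩ := Nat.find_spec hex
  have hmin : ∀ j, 0 < j → j < Nat.find hex → (g ^ j) a ≠ b :=
    fun j hj hjm h => Nat.find_min hex hjm ⟨hj, h⟩
  have hret : ∀ j, 0 < j → j < Nat.find hex → (g ^ j) a ≠ a := by
    intro j hj hjm h
    have := congrArg (g ^ (Nat.find hex - j)) h
    rw [← mul_apply, ← pow_add, Nat.sub_add_cancel hjm.le, hgm] at this
    exact hmin _ (by omega) (by omega) this.symm
  have hS : Set.MapsTo (swap a b * g) {z | ∃ j < Nat.find hex, (g ^ j) a = z}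
      {z | ∃ j < Nat.find hex, (g ^ j) a = z} := by
    rintro _ ⟨j, hj, rfl⟩
    rcases Nat.lt_or_ge (j + 1) (Nat.find hex) with hj1 | hj1
    · refine ⟨j + 1, hj1, ?_⟩
      rw [mul_apply, ← mul_apply g, ← pow_succ',
        swap_apply_of_ne_of_ne (hret _ j.succ_pos hj1) (hmin _ j.succ_pos hj1)]
    · refine ⟨0, hm, ?_⟩
      rw [mul_apply, ← mul_apply g, ← pow_succ', show j + 1 = Nat.find hex by omega, hgm,
        swap_apply_right, pow_zero, one_apply]
  intro hsc
  obtain ⟨j, hj, hjb⟩ := hsc.mem_of_mapsTo hS ⟨0, hm, by simp⟩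
  rcases Nat.eq_zero_or_pos j with rfl | hj0
  exacts [hne hjb, hmin j hj0 hj hjb]

/-- The `g`-cycle of `a` avoids `b`, so it stays inside the `swap a b * g`-cycle of `a`;
the predecessor `g⁻¹ a` is then sent to `b`. -/
theorem sameCycle_swap_mul_of_not_sameCycle (hab : ¬ g.SameCycle a b) :
    (swap a b * g).SameCycle a b := by
  have hS : Set.MapsTo g {z | g.SameCycle a z ∧ (swap a b * g).SameCycle a z}
      {z | g.SameCycle a z ∧ (swap a b * g).SameCycle a z} := by
    rintro z ⟨hz, hz'⟩
    have hgz := hz.trans (sameCycle_apply_self g z)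
    by_cases ha : g z = a
    · rw [Set.mem_ofPred_eq, ha]; exact ⟨.rfl, .rfl⟩
    have hstep := sameCycle_apply_self (swap a b * g) z
    rw [swap_mul_apply_of_ne ha fun hb : g z = b => hab (hb ▸ hgz)] at hstep
    exact ⟨hgz, hz'.trans hstep⟩
  have hpred : g.SameCycle a (g⁻¹ a) := by simpa using (sameCycle_apply_self g (g⁻¹ a)).symm
  have hstep := sameCycle_apply_self (swap a b * g) (g⁻¹ a)
  simp only [mul_apply] at hstep
  simpa using (hpred.mem_of_mapsTo hS ⟨.rfl, .rfl⟩).2.trans hstep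

theorem SameCycle.setoid_eq_merge_swap_mul (hab : g.SameCycle a b) :
    SameCycle.setoid g = (SameCycle.setoid (swap a b * g)).merge a b := by
  ext x y
  show g.SameCycle x y ↔ (swap a b * g).SameCycle x y ∨
    ((swap a b * g).SameCycle x a ∧ (swap a b * g).SameCycle y b) ∨
    ((swap a b * g).SameCycle x b ∧ (swap a b * g).SameCycle y a)
  constructor
  · intro hxy
    by_cases hax : g.SameCycle a x
    · rcases hax.swap_mul_or (b := b) with hx | hx <;>
        rcases (hax.trans hxy).swap_mul_or (b := b) with hy | hy
      exacts [Or.inl (hx.symm.trans hy), Or.inr (Or.inl ⟨hx.symm, hy.symm⟩),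
        Or.inr (Or.inr ⟨hx.symm, hy.symm⟩), Or.inl (hx.symm.trans hy)]
    · exact Or.inl (hxy.swap_mul_of_not hax fun hbx => hax (hab.trans hbx))
  · rintro (h | ⟨hx, hy⟩ | ⟨hx, hy⟩)
    · exact h.of_swap_mul hab
    · exact ((hx.of_swap_mul hab).trans hab).trans (hy.of_swap_mul hab).symm
    · exact ((hx.of_swap_mul hab).trans hab.symm).trans (hy.of_swap_mul hab).symm

theorem SameCycle.cycleCount_swap_mul (hab : g.SameCycle a b) (hne : a ≠ b) :
    cycleCount (swap a b * g) = cycleCount g + 1 := by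
  rw [cycleCount, cycleCount, hab.setoid_eq_merge_swap_mul,
    Setoid.card_quotient_merge_add_one (hab.not_sameCycle_swap_mul hne)]

theorem cycleCount_swap_mul_of_not_sameCycle (hab : ¬ g.SameCycle a b) :
    cycleCount (swap a b * g) + 1 = cycleCount g := by
  have := (sameCycle_swap_mul_of_not_sameCycle hab).cycleCount_swap_mul
    fun h : a = b => hab (h ▸ .rfl)
  rwa [swap_mul_self_mul, eq_comm] at this

end Swap

def componentSetoid (L : List (α × α)) : Setoid α :=
  Relation.EqvGen.setoid fun x y => (x, y) ∈ L

noncomputable def numComponents (L : List (α × α)) : ℕ :=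
  Nat.card (Quotient (componentSetoid L))

theorem numComponents_nil : numComponents ([] : List (α × α)) = Nat.card α := by
  refine (Nat.card_eq_of_bijective _ ⟨fun x y h => ?_, Quotient.mk_surjective⟩).symm
  have hxy : Relation.EqvGen (fun x y => (x, y) ∈ ([] : List (α × α))) x y := Quotient.exact h
  exact eq_equivalence.eqvGen_iff.mp (hxy.mono fun _ _ h => absurd h List.not_mem_nil)

theorem componentSetoid_mono {L L' : List (α × α)} (h : L ⊆ L') :
    componentSetoid L ≤ componentSetoid L' :=
  fun _ _ hxy => Relation.EqvGen.mono (fun _ _ hp => h hp) _ _ hxy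

theorem componentSetoid_cons (p : α × α) (L : List (α × α)) :
    componentSetoid (p :: L) = (componentSetoid L).merge p.1 p.2 := by
  refine le_antisymm (Setoid.eqvGen_le fun x y hxy => ?_) fun x y hxy => ?_
  · rcases List.mem_cons.mp hxy with rfl | hxy
    · exact Or.inr (Or.inl ⟨Setoid.refl' _ _, Setoid.refl' _ _⟩)
    · exact Or.inl (Relation.EqvGen.rel _ _ hxy)
  · have hmono := componentSetoid_mono (List.subset_cons_self p L)
    have hp : componentSetoid (p :: L) p.1 p.2 := Relation.EqvGen.rel _ _ List.mem_cons_self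
    rcases hxy with h | ⟨hx, hy⟩ | ⟨hx, hy⟩
    · exact hmono h
    · exact ((hmono hx).trans _ _ _ hp).trans _ _ _ ((hmono hy).symm _ _)
    · exact ((hmono hx).trans _ _ _ (hp.symm _ _)).trans _ _ _ ((hmono hy).symm _ _)

theorem numComponents_cons_of_rel [Finite α] {p : α × α} {L : List (α × α)}
    (h : componentSetoid L p.1 p.2) : numComponents (p :: L) = numComponents L := by
  rw [numComponents, componentSetoid_cons, Setoid.merge_eq_self h, numComponents]

theorem numComponents_cons_add_one [Finite α] {p : α × α} {L : List (α × α)}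
    (h : ¬ componentSetoid L p.1 p.2) : numComponents (p :: L) + 1 = numComponents L := by
  rw [numComponents, componentSetoid_cons, Setoid.card_quotient_merge_add_one h, numComponents]

section Transpositions

variable [DecidableEq α]

def swapProd (L : List (α × α)) : Perm α := (L.map fun p => swap p.1 p.2).prod

@[simp] theorem swapProd_nil : swapProd ([] : List (α × α)) = 1 := rfl

@[simp] theorem swapProd_cons (p : α × α) (L : List (α × α)) :
    swapProd (p :: L) = swap p.1 p.2 * swapProd L := by
  simp [swapProd]

theorem swapProd_append (A B : List (α × α)) : swapProd (A ++ B) = swapProd A * swapProd B := by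
  simp [swapProd]

theorem componentSetoid_swapProd_apply (L : List (α × α)) (x : α) :
    componentSetoid L x (swapProd L x) := by
  induction L with
  | nil => exact Setoid.refl' _ x
  | cons p L ih =>
    refine Setoid.trans' _ (componentSetoid_mono (List.subset_cons_self p L) ih) ?_
    have hp : componentSetoid (p :: L) p.1 p.2 := Relation.EqvGen.rel _ _ List.mem_cons_self
    rw [swapProd_cons, mul_apply]
    rcases eq_or_ne (swapProd L x) p.1 with h | h
    · rw [h, swap_apply_left]; exact hp
    rcases eq_or_ne (swapProd L x) p.2 with h' | h'
    · rw [h', swap_apply_right]; exact Setoid.symm' _ hp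
    · rw [swap_apply_of_ne_of_ne h h']

variable [Finite α]

/-- Splitting off the transposition `(x (g x))` raises the number of cycles by one. -/
theorem exists_swapProd_eq (g : Perm α) : ∃ L : List (α × α), (∀ p ∈ L, p.1 ≠ p.2) ∧
    swapProd L = g ∧ L.length + cycleCount g = Nat.card α := by
  by_cases hg : g = 1
  · exact ⟨[], by simp, by simp [hg], by simp [hg, cycleCount_one]⟩
  obtain ⟨x, hx⟩ : ∃ x, g x ≠ x := not_forall.mp fun h => hg (Equiv.ext h)
  have hsplit := (sameCycle_apply_self g x).cycleCount_swap_mul hx.symm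
  obtain ⟨L, hL, hprod, hlen⟩ := exists_swapProd_eq (swap x (g x) * g)
  refine ⟨(x, g x) :: L, ?_, ?_, ?_⟩
  · simpa [hx.symm] using hL
  · rw [swapProd_cons, hprod, swap_mul_self_mul]
  · simp only [List.length_cons]; omega
termination_by Nat.card α - cycleCount g
decreasing_by
  have := cycleCount_le_card (swap x (g x) * g)
  omega

theorem cycleCount_swapProd_add_length_mod_two (L : List (α × α))
    (hL : ∀ p ∈ L, p.1 ≠ p.2) :
    (cycleCount (swapProd L) + L.length) % 2 = Nat.card α % 2 := by
  induction L with
  | nil => simp [cycleCount_one]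
  | cons p L ih =>
    have ih := ih fun q hq => hL q (List.mem_cons_of_mem p hq)
    rw [swapProd_cons, List.length_cons]
    by_cases hp : (swapProd L).SameCycle p.1 p.2
    · have := hp.cycleCount_swap_mul (hL p List.mem_cons_self)
      omega
    · have := cycleCount_swap_mul_of_not_sameCycle hp
      omega

theorem componentSetoid_of_sameCycle_swapProd {L : List (α × α)} {x y : α}
    (h : (swapProd L).SameCycle x y) : componentSetoid L x y :=
  h.mem_of_mapsTo (S := {z | componentSetoid L x z})
    (fun z hz => Setoid.trans' _ hz (componentSetoid_swapProd_apply L z))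
    (Setoid.refl' (componentSetoid L) x)

/-- Each transposition changes the number of cycles by one, and it can only raise it when its
two points already lie in one component, while it merges two components otherwise. -/
theorem cycleCount_swapProd_add_card_le (L : List (α × α)) (hL : ∀ p ∈ L, p.1 ≠ p.2) :
    cycleCount (swapProd L) + Nat.card α ≤ L.length + 2 * numComponents L := by
  induction L with
  | nil => simp [cycleCount_one, numComponents_nil]; omega
  | cons p L ih =>
    have ih := ih fun q hq => hL q (List.mem_cons_of_mem p hq)
    have hp := hL p List.mem_cons_self
    rw [swapProd_cons, List.length_cons]
    by_cases hrel : componentSetoid L p.1 p.2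
    · have hcomp := numComponents_cons_of_rel hrel
      by_cases hsc : (swapProd L).SameCycle p.1 p.2
      · have := hsc.cycleCount_swap_mul hp
        omega
      · have := cycleCount_swap_mul_of_not_sameCycle hsc
        omega
    · have hcomp := numComponents_cons_add_one hrel
      have := cycleCount_swap_mul_of_not_sameCycle
        fun hsc => hrel (componentSetoid_of_sameCycle_swapProd hsc)
      omega

end Transpositions

variable [Finite α]

theorem cycleCount_add_cycleCount_add_cycleCount_mul_mod_two (σ ρ : Perm α) :
    (cycleCount ρ + cycleCount σ + cycleCount (ρ * σ) + Nat.card α) % 2 = 0 := by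
  classical
  obtain ⟨A, hA, rfl, hAlen⟩ := exists_swapProd_eq ρ
  obtain ⟨B, hB, rfl, hBlen⟩ := exists_swapProd_eq σ
  have := cycleCount_swapProd_add_length_mod_two (A ++ B)
    fun p hp => (List.mem_append.mp hp).elim (hA p) (hB p)
  rw [swapProd_append, List.length_append] at this
  omega

/-- Euler's inequality `V + E + F ≤ #darts + 2` for maps: `ρ σ` is a product of
`2 n - c(ρ) - c(σ)` transpositions that connect `α`. -/
theorem cycleCount_add_cycleCount_add_cycleCount_mul_le (σ ρ : Perm α)
    (hconn : ∀ x y : α, ∃ g ∈ Subgroup.closure ({σ, ρ} : Set (Perm α)), g x = y) :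
    cycleCount ρ + cycleCount σ + cycleCount (ρ * σ) ≤ Nat.card α + 2 := by
  classical
  obtain ⟨A, hA, rfl, hAlen⟩ := exists_swapProd_eq ρ
  obtain ⟨B, hB, rfl, hBlen⟩ := exists_swapProd_eq σ
  have hstep : ∀ g ∈ ({swapProd B, swapProd A} : Set (Perm α)), ∀ x,
      componentSetoid (A ++ B) x (g x) := by
    rintro g (rfl | rfl) x
    · exact componentSetoid_mono (List.subset_append_right A B)
        (componentSetoid_swapProd_apply B x)
    · exact componentSetoid_mono (List.subset_append_left A B)
        (componentSetoid_swapProd_apply A x)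
  have hcomp : numComponents (A ++ B) ≤ 1 := by
    refine Finite.card_le_one_iff_subsingleton.mpr ⟨fun c c' => ?_⟩
    induction c using Quotient.ind with | _ x => ?_
    induction c' using Quotient.ind with | _ y => ?_
    obtain ⟨g, hg, rfl⟩ := hconn x y
    exact Quotient.sound (rel_apply_of_mem_closure hstep hg x)
  have := cycleCount_swapProd_add_card_le (A ++ B)
    fun p hp => (List.mem_append.mp hp).elim (hA p) (hB p)
  rw [swapProd_append, List.length_append] at this
  omega

end Equiv.Perm

theorem Nat.card_eq_sum_card_fiber {β γ : Type*} [Finite β] [Fintype γ] (f : β → γ) :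
    Nat.card β = ∑ c, Nat.card {x // f x = c} := by
  rw [← Nat.card_sigma]
  exact Nat.card_congr (Equiv.sigmaFiberEquiv f).symm

namespace CombMap

open Equiv.Perm

variable (M : CombMap)

theorem nV_add_nE_add_nF_le : M.nV + M.nE + M.nF ≤ Nat.card M.D + 2 :=
  cycleCount_add_cycleCount_add_cycleCount_mul_le M.σ M.ρ M.conn

theorem nV_add_nE_add_nF_add_card_mod_two : (M.nV + M.nE + M.nF + Nat.card M.D) % 2 = 0 :=
  cycleCount_add_cycleCount_add_cycleCount_mul_mod_two M.σ M.ρ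

variable {M}

theorem vtx_ρ (d : M.D) : M.vtx (M.ρ d) = M.vtx d :=
  Quotient.sound (sameCycle_apply_self M.ρ d).symm

theorem fce_φ (d : M.D) : M.fce (M.φ d) = M.fce d :=
  Quotient.sound (sameCycle_apply_self M.φ d).symm

theorem edg_eq_edg_iff {d d' : M.D} : M.edg d' = M.edg d ↔ d' = d ∨ d' = M.σ d := by
  refine ⟨fun h => ?_, ?_⟩
  · obtain ⟨i, hi, rfl⟩ := (Quotient.exact h : M.σ.SameCycle d' d).symm.exists_pow_eq'
    have : orderOf M.σ ≤ 2 :=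
      orderOf_le_of_pow_eq_one two_pos (Equiv.ext fun d => by simp [sq, M.σ_invol])
    have : i < 2 := hi.trans_le this
    interval_cases i <;> simp
  · rintro (rfl | rfl)
    exacts [rfl, Quotient.sound (sameCycle_apply_self M.σ d).symm]

variable (M)

theorem card_darts_eq_two_mul_nE : Nat.card M.D = 2 * M.nE := by
  have := Fintype.ofFinite M.Edge
  have hfiber : ∀ e : M.Edge, Nat.card {d // M.edg d = e} = 2 := by
    rintro ⟨d⟩
    calc Nat.card {d' // M.edg d' = M.edg d}
        = Nat.card ({d, M.σ d} : Set M.D) := Nat.card_congr (Equiv.subtypeEquivRight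
          fun _ => edg_eq_edg_iff)
      _ = 2 := by rw [Nat.card_coe_set_eq, Set.ncard_pair (M.σ_fixfree d).symm]
  simp only [Nat.card_eq_sum_card_fiber M.edg, hfiber, Finset.sum_const, Finset.card_univ,
    smul_eq_mul, nE, Nat.card_eq_fintype_card, mul_comm]

theorem faceSize_add_three_mul_le (h3 : ∀ f, 3 ≤ M.faceSize f) (fe : M.Face) :
    M.faceSize fe + 3 * (M.nF - 1) ≤ Nat.card M.D := by
  classical
  have := Fintype.ofFinite M.Face
  rw [Nat.card_eq_sum_card_fiber M.fce, ← Finset.add_sum_erase _ _ (Finset.mem_univ fe)]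
  have := Finset.card_nsmul_le_sum (Finset.univ.erase fe) M.faceSize 3 fun f _ => h3 f
  rw [Finset.card_erase_of_mem (Finset.mem_univ fe), Finset.card_univ, smul_eq_mul] at this
  rw [nF, Nat.card_eq_fintype_card]
  exact Nat.add_le_add_left ((mul_comm _ _).trans_le this) _

variable {M}

theorem φ_ne_self (hs : M.Simple) (d : M.D) : M.φ d ≠ d := fun h =>
  hs.1 d (by rw [← vtx_ρ (M.σ d)]; exact congrArg M.vtx h.symm)

/-- Were `d` and `σ (φ d)` parallel edges, either `d` would be a dual loop or `φ d = d`. -/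
theorem φ_φ_ne_self (hs : M.Simple) (hd : M.DualLoopFree) (d : M.D) : M.φ (M.φ d) ≠ d := by
  intro h
  have hv : M.vtx d = M.vtx (M.σ (M.φ d)) := by
    rw [← vtx_ρ (M.σ (M.φ d))]; exact congrArg M.vtx h.symm
  have hv' : M.vtx (M.σ d) = M.vtx (M.σ (M.σ (M.φ d))) := by
    rw [M.σ_invol, ← vtx_ρ (M.σ d)]; rfl
  rcases edg_eq_edg_iff.mp (hs.2 d _ hv hv').symm with h' | h'
  · have hσd : M.σ d = M.φ d := by rw [← M.σ_invol (M.φ d), h']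
    exact hd d (by rw [hσd, fce_φ])
  · exact φ_ne_self hs d (M.σ.injective h')

theorem three_le_faceSize (hs : M.Simple) (hd : M.DualLoopFree) (f : M.Face) :
    3 ≤ M.faceSize f := by
  obtain ⟨d, rfl⟩ := Quotient.mk_surjective f
  calc 3 = ({d, M.φ d, M.φ (M.φ d)} : Set M.D).ncard :=
        (Set.ncard_eq_three.mpr ⟨_, _, _, (φ_ne_self hs d).symm, (φ_φ_ne_self hs hd d).symm,
          (φ_ne_self hs (M.φ d)).symm, rfl⟩).symm
    _ ≤ {x | M.fce x = M.fce d}.ncard :=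
        Set.ncard_le_ncard (by rintro _ (rfl | rfl | rfl) <;> simp [fce_φ])
    _ = M.faceSize (M.fce d) := Nat.card_coe_set_eq _ |>.symm

theorem card_faceAdj_lt_nF (hd : M.DualLoopFree) (f : M.Face) :
    Nat.card {f' // M.FaceAdj f f'} < M.nF :=
  Finite.card_subtype_lt fun ⟨d, hdf, hσd⟩ => hd d (hdf.trans hσd.symm)

theorem nE_le_choose_two (hs : M.Simple) : M.nE ≤ M.nV.choose 2 := by
  classical
  have := Fintype.ofFinite M.Vertex
  let ends : M.Edge → {z : Sym2 M.Vertex // ¬ z.IsDiag} :=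
    Quotient.lift
      (fun d => ⟨s(M.vtx d, M.vtx (M.σ d)), fun h => hs.1 d (Sym2.mk_isDiag_iff.mp h)⟩)
      fun d d' h => by
        rcases edg_eq_edg_iff.mp (Quotient.sound h).symm with rfl | rfl
        · rfl
        · simp only [M.σ_invol, Sym2.eq_swap]
  have hinj : Function.Injective ends := by
    rintro ⟨d⟩ ⟨d'⟩ h
    rcases Sym2.eq_iff.mp (congrArg Subtype.val h) with ⟨h₁, h₂⟩ | ⟨h₁, h₂⟩
    · exact hs.2 d d' h₁ h₂
    · refine (hs.2 d (M.σ d') h₁ (by rw [M.σ_invol]; exact h₂)).trans ?_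
      exact edg_eq_edg_iff.mpr (Or.inr rfl)
  calc M.nE ≤ Nat.card {z : Sym2 M.Vertex // ¬ z.IsDiag} := Nat.card_le_card_of_injective _ hinj
    _ = M.nV.choose 2 := by
      rw [Nat.card_eq_fintype_card, Sym2.card_subtype_not_diag, nV, Nat.card_eq_fintype_card]

end CombMap

/-- Every empty 6-circuit whose spanning 6-face `f_e` neighbours 6 pairwise different
faces has exactly 6 vertices and at least 13 edges. -/
theorem empty_six_circuit_vertices_edges
    (M : CombMap) (fe : M.Face)
    (hcirc : M.IsEmptyCircuit 6 fe)
    (hnbrs : Nat.card {f : M.Face // M.FaceAdj fe f} = 6) :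
    M.nV = 6 ∧ 13 ≤ M.nE := by
  obtain ⟨hV, hfe, -, hsimple, hdual, -⟩ := hcirc
  have hF := M.card_faceAdj_lt_nF hdual fe
  have hdarts := M.faceSize_add_three_mul_le (M.three_le_faceSize hsimple hdual) fe
  have hE := M.nE_le_choose_two hsimple
  have heuler := M.nV_add_nE_add_nF_le
  have hparity := M.nV_add_nE_add_nF_add_card_mod_two
  rw [hnbrs] at hF
  rw [hfe] at hdarts
  rw [Nat.choose_two_right] at hE
  rw [M.card_darts_eq_two_mul_nE] at hdarts heuler hparity
  have hV6 : M.nV = 6 := by interval_cases M.nV <;> omega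
  refine ⟨hV6, ?_⟩
  by_contra! hE13
  have hE12 : M.nE = 12 := by omega
  have hF7 : M.nF = 7 := by omega
  omega
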